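/- arXiv:2307.09927 — 4 statements merged into one kernel-verified Lean document; each statement's English description precedes it below -/
import Mathlib

section
/- Let F be a field with char(F) ≠ 2 and let α, α' ∈ F. The algebras A(α) and A(α') defined on basis e1, e2 by e1·e1 = (1/2)e1, e1·e2 = e2·e1 = (1/2)e2, e2·e2 = α·e1 (respectively α'·e1) are isomorphic if and only if α' = a²α for some nonzero a ∈ F. -/
/-!
An isomorphism `f : A(α) → A(α')` sends `e1` to some `u` with `u u = u/2` and `e2` to some `v`
with `u v = v/2` and `v v = α u`. If `u` had a nonzero `e2`-coordinate, the middle equation would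
make `v` a multiple of `u`, contradicting injectivity; so `u = e1`, and then `v v = α e1` forces
`v = s e2` with `α = s² α'`. Conversely `e2 ↦ a⁻¹ e2` is an isomorphism `A(α) → A(a² α)`.
-/

/-- Multiplication on `F × F` given by `e1·e1 = (1/2)e1`, `e1·e2 = e2·e1 = (1/2)e2`,
`e2·e2 = α·e1`, extended bilinearly. -/
def mul4 {F : Type*} [Field F] (α : F) (x y : F × F) : F × F :=
  ((1/2 : F) * x.1 * y.1 + α * x.2 * y.2,
   (1/2 : F) * x.1 * y.2 + (1/2 : F) * x.2 * y.1)

section Mul4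

variable {F : Type*} [Field F] (α : F)

lemma mul4_one_zero_one_zero : mul4 α (1, 0) (1, 0) = (1 / 2 : F) • ((1, 0) : F × F) := by
  simp [mul4]

lemma mul4_one_zero_zero_one : mul4 α (1, 0) (0, 1) = (1 / 2 : F) • ((0, 1) : F × F) := by
  simp [mul4]

lemma mul4_zero_one_zero_one : mul4 α (0, 1) (0, 1) = α • ((1, 0) : F × F) := by
  simp [mul4]

variable {α}

/-- Such a `u` must be `(1/2, q)`, and for it `u v = v/2` forces `v.2 = 2 q v.1`. -/
lemma eq_smul_of_mul4_of_snd_ne_zero (h2 : (2 : F) ≠ 0) {u v : F × F}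
    (huu : mul4 α u u = (1 / 2 : F) • u) (huv : mul4 α u v = (1 / 2 : F) • v) (hq : u.2 ≠ 0) :
    v = (2 * v.1) • u := by
  obtain ⟨p, q⟩ := u
  obtain ⟨r, s⟩ := v
  simp only [mul4, Prod.smul_mk, smul_eq_mul, Prod.mk.injEq] at huu huv hq ⊢
  field_simp at huu huv
  have hp : 2 * p = 1 := by linear_combination huu.2
  constructor
  · linear_combination -r * hp
  · linear_combination -2 * huv.2 + s * hp

lemma eq_one_zero_of_mul4 (h2 : (2 : F) ≠ 0) {u v : F × F}
    (huu : mul4 α u u = (1 / 2 : F) • u) (huv : mul4 α u v = (1 / 2 : F) • v)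
    (hu : u ≠ 0) (hv : ∀ c : F, v ≠ c • u) : u = (1, 0) := by
  have hq : u.2 = 0 := by
    by_contra hq
    exact hv _ (eq_smul_of_mul4_of_snd_ne_zero h2 huu huv hq)
  obtain ⟨p, q⟩ := u
  simp only at hq
  subst hq
  have hp : p ≠ 0 := fun hp => hu (by simp [hp])
  simp only [mul4, Prod.smul_mk, smul_eq_mul, Prod.mk.injEq] at huu
  field_simp at huu
  simpa using mul_right_cancel₀ hp (by linear_combination huu.1)

lemma eq_sq_mul_of_mul4_self (h2 : (2 : F) ≠ 0) {β : F} {v : F × F}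
    (hvv : mul4 α v v = β • (1, 0)) (hs : v.2 ≠ 0) : β = v.2 ^ 2 * α := by
  obtain ⟨r, s⟩ := v
  simp only [mul4, Prod.smul_mk, smul_eq_mul, Prod.mk.injEq] at hvv hs ⊢
  field_simp at hvv
  have hr : r = 0 := by
    have : r * s * 2 = 0 := by linear_combination hvv.2
    simpa [hs, h2] using this
  subst hr
  apply mul_left_cancel₀ h2
  linear_combination -hvv.1

end Mul4

lemma map_zero_one_ne_smul_map_one_zero {F M : Type*} [Field F] [AddCommGroup M] [Module F M]
    {f : F × F →ₗ[F] M} (hf : Function.Injective f) (c : F) : f (0, 1) ≠ c • f (1, 0) := by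
  rw [← map_smul]
  intro h
  simpa using congrArg Prod.snd (hf h)

theorem stmt_4 {F : Type*} [Field F] (hchar : ringChar F ≠ 2) (α α' : F) :
    (∃ f : (F × F) ≃ₗ[F] (F × F),
        ∀ x y : F × F, f (mul4 α x y) = mul4 α' (f x) (f y)) ↔
      ∃ a : F, a ≠ 0 ∧ α' = a ^ 2 * α := by
  have h2 : (2 : F) ≠ 0 := Ring.two_ne_zero hchar
  constructor
  · rintro ⟨f, hf⟩
    have huu := hf (1, 0) (1, 0)
    have huv := hf (1, 0) (0, 1)
    have hvv := hf (0, 1) (0, 1)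
    simp only [mul4_one_zero_one_zero, mul4_one_zero_zero_one, mul4_zero_one_zero_one, map_smul]
      at huu huv hvv
    have hindep : ∀ c : F, f (0, 1) ≠ c • f (1, 0) :=
      map_zero_one_ne_smul_map_one_zero (f := f.toLinearMap) f.injective
    have hu : f (1, 0) = (1, 0) := eq_one_zero_of_mul4 h2 huu.symm huv.symm (by simp) hindep
    rw [hu] at hvv hindep
    have hs : (f (0, 1)).2 ≠ 0 := fun hs => hindep (f (0, 1)).1 (by ext <;> simp [hs])
    exact ⟨_, inv_ne_zero hs, by rw [eq_sq_mul_of_mul4_self h2 hvv.symm hs]; field_simp⟩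
  · rintro ⟨a, ha, rfl⟩
    refine ⟨(LinearEquiv.refl F F).prodCongr (LinearEquiv.smulOfNeZero F F a⁻¹ (inv_ne_zero ha)), ?_⟩
    intro x y
    simp only [mul4, LinearEquiv.prodCongr_apply, LinearEquiv.refl_apply,
      LinearEquiv.smulOfNeZero_apply, smul_eq_mul, Prod.mk.injEq]
    exact ⟨by field_simp, by ring⟩
end

section
/- Let F be a field and let A be the 2-dimensional algebra over F with e1·e1 = e2 and all other products of basis vectors zero. Then the automorphism group of A consists exactly of the linear maps with matrix [[x,0],[z,x²]] where x ∈ F is nonzero and z ∈ F. -/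
/-- Multiplication on `F × F` given by `e1·e1 = e2` and all other basis
products zero, extended bilinearly. -/
def mul6 {F : Type*} [Field F] (x y : F × F) : F × F :=
  (0, x.1 * y.1)

theorem stmt_6 {F : Type*} [Field F] (f : (F × F) ≃ₗ[F] (F × F)) :
    (∀ x y : F × F, f (mul6 x y) = mul6 (f x) (f y)) ↔
      ∃ x z : F, x ≠ 0 ∧ f (1, 0) = (x, z) ∧ f (0, 1) = (0, x ^ 2) := by
  constructor
  · intro h
    have h1 := h (1, 0) (1, 0)
    simp only [mul6] at h1
    norm_num at h1
    refine ⟨(f (1, 0)).1, (f (1, 0)).2, ?_, rfl, ?_⟩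
    · intro hx
      have h0 : f (0, 1) = 0 := by
        rw [h1, hx]; simp
      have := f.injective (h0.trans (map_zero f).symm)
      simp [Prod.ext_iff] at this
    · rw [h1]; ring_nf
  · rintro ⟨x, z, hx, h1, h2⟩ u v
    have key : ∀ p q : F, f (p, q) = (p * x, p * z + q * x ^ 2) := by
      intro p q
      have hpq : ((p, q) : F × F) = p • ((1 : F), (0 : F)) + q • ((0 : F), (1 : F)) := by
        simp
      rw [hpq, map_add, map_smul, map_smul, h1, h2]
      simp [Prod.ext_iff, mul_comm]
    have hu : f u = (u.1 * x, u.1 * z + u.2 * x ^ 2) := by rw [← key]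
    have hv : f v = (v.1 * x, v.1 * z + v.2 * x ^ 2) := by rw [← key]
    simp only [mul6, hu, hv]
    rw [key]
    simp [Prod.ext_iff]; ring
end

section
/- Let F be a field with char(F) = 2 and β, β' ∈ F. The algebras with products e1·e1 = e1, e1·e2 = e2·e1 = e2, e2·e2 = β·e1 + e2, respectively with β' in place of β, are isomorphic if and only if β' = β + a + a² for some a ∈ F. -/
/-- Multiplication on `F × F` given by `e1·e1 = e1`, `e1·e2 = e2·e1 = e2`,
`e2·e2 = β·e1 + e2`, extended bilinearly. -/
def mul9 {F : Type*} [Field F] (β : F) (x y : F × F) : F × F :=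
  (x.1 * y.1 + β * x.2 * y.2, x.1 * y.2 + x.2 * y.1 + x.2 * y.2)

theorem stmt_9 {F : Type*} [Field F] (hchar : ringChar F = 2) (β β' : F) :
    (∃ f : (F × F) ≃ₗ[F] (F × F),
        ∀ x y : F × F, f (mul9 β x y) = mul9 β' (f x) (f y)) ↔
      ∃ a : F, β' = β + a + a ^ 2 := by
  haveI : CharP F 2 := hchar ▸ ringChar.charP F
  have h2 : (2 : F) = 0 := CharP.cast_eq_zero F 2
  constructor
  · rintro ⟨f, hf⟩
    -- f fixes the identity (1,0)
    have hid : ∀ x : F × F, mul9 β (1, 0) x = x := by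
      intro x; simp [mul9]
    have hmul1 : ∀ x : F × F, mul9 β' (f (1, 0)) (f x) = f x := by
      intro x; rw [← hf, hid]
    have h1 : f (1, 0) = (1, 0) := by
      have := hmul1 (f.symm (1, 0))
      rw [f.apply_symm_apply] at this
      simpa [mul9, Prod.ext_iff] using this
    set u := (f (0, 1)).1 with hu
    set v := (f (0, 1)).2 with hv
    have hfb : f (β, 1) = (β + u, v) := by
      have hsplit : ((β, 1) : F × F) = β • (1, 0) + (0, 1) := by simp
      rw [hsplit, f.map_add, f.map_smul, h1]
      rw [Prod.ext_iff]
      constructor <;> simp [hu, hv]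
    have key : ((β + u, v) : F × F) = (u * u + β' * v * v, u * v + v * u + v * v) := by
      rw [← hfb]
      have := hf (0, 1) (0, 1)
      simpa [mul9, hu, hv] using this
    rw [Prod.ext_iff] at key
    obtain ⟨k1, k2⟩ := key
    have hvne : v ≠ 0 := by
      intro h0
      have h01 : f (0, 1) = f (u • (1, 0)) := by
        rw [f.map_smul, h1, Prod.ext_iff]
        refine ⟨by simp [hu], ?_⟩
        rw [← hv]; simp [h0]
      have := f.injective h01
      rw [Prod.ext_iff] at this
      simpa using this.2
    have hv1 : v = 1 := by
      have hfac : v * (v - 1) = 0 := by linear_combination -k2 - u * v * h2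
      rcases mul_eq_zero.mp hfac with h | h
      · exact absurd h hvne
      · exact sub_eq_zero.mp h
    rw [hv1] at k1
    exact ⟨u, by linear_combination -k1 - u ^ 2 * h2⟩
  · rintro ⟨a, ha⟩
    refine ⟨{ toFun := fun p => (p.1 + a * p.2, p.2),
              invFun := fun p => (p.1 - a * p.2, p.2),
              map_add' := by intro x y; simp [Prod.ext_iff]; ring,
              map_smul' := by intro c x; simp [Prod.ext_iff]; ring,
              left_inv := by intro x; simp,
              right_inv := by intro x; simp }, ?_⟩
    intro x y
    obtain ⟨x1, x2⟩ := x
    obtain ⟨y1, y2⟩ := y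
    simp only [mul9, Prod.mk.injEq, ha, LinearEquiv.coe_mk, LinearMap.coe_mk, AddHom.coe_mk]
    constructor
    · linear_combination -a ^ 2 * x2 * y2 * h2
    · linear_combination -a * x2 * y2 * h2
end

section
/- Let F be a field with char(F) ≠ 2, 3. The two associative dialgebras on F² with common left product e1⊣e1 = e1 (all other ⊣-products zero) and right products ⊢ given respectively by (i) e1⊢e1 = e1 only, and (ii) e1⊢e1 = e1, e2⊢e1 = e2, are not isomorphic as dialgebras. -/
/-- Common left product: `e1 ⊣ e1 = e1`, all other basis products zero. -/
def dashv17 {F : Type*} [Field F] (x y : F × F) : F × F :=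
  (x.1 * y.1, 0)

/-- Right product (i): `e1 ⊢ e1 = e1` only. -/
def vdash17a {F : Type*} [Field F] (x y : F × F) : F × F :=
  (x.1 * y.1, 0)

/-- Right product (ii): `e1 ⊢ e1 = e1`, `e2 ⊢ e1 = e2`. -/
def vdash17b {F : Type*} [Field F] (x y : F × F) : F × F :=
  (x.1 * y.1, x.2 * y.1)

theorem stmt_17 {F : Type*} [Field F] (h2 : ringChar F ≠ 2) (h3 : ringChar F ≠ 3) :
    ¬ ∃ f : (F × F) ≃ₗ[F] (F × F),
        (∀ x y : F × F, f (dashv17 x y) = dashv17 (f x) (f y)) ∧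
        (∀ x y : F × F, f (vdash17a x y) = vdash17b (f x) (f y)) := by
  rintro ⟨f, ha, hb⟩
  set u := f.symm (0, 1) with hu
  set v := f.symm (1, 0) with hv
  have e1 := ha u v
  have e2 := hb u v
  rw [show vdash17a u v = dashv17 u v from rfl] at e2
  rw [e1] at e2
  have hfu : f u = (0, 1) := f.apply_symm_apply _
  have hfv : f v = (1, 0) := f.apply_symm_apply _
  rw [hfu, hfv] at e2
  have := congrArg Prod.snd e2
  simp [dashv17, vdash17b] at this
end
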